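/- Order statistics of uniforms stay within twice the threshold: Let U_1^j, …, U_n^j be i.i.d. uniform [0,1] (for each fixed j ∈ {1,…,d}), k ≤ n, and T ≥ (7/2)((log d)/k + 1). Then P( (n/k) U^j_{(⌊kT⌋)} > 2T ) ≤ e^{−2kT/7} for each j, and hence P( ∃ j ≤ d: (n/k) U^j_{(⌊kT⌋)} > 2T ) ≤ d e^{−2kT/7} ≤ e^{−k}. -/

import Mathlib

open MeasureTheory ProbabilityTheory Set

/-- The `m`-th smallest value (`m`-th order statistic) of `V_1,…,V_n`:
the least `s` such that at least `m` of the values are `≤ s`. -/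
noncomputable def orderStat {n : ℕ} (V : Fin n → ℝ) (m : ℕ) : ℝ :=
  sInf {s : ℝ | m ≤ (Finset.univ.filter (fun i => V i ≤ s)).card}

/-- Order statistics of uniforms stay within twice the threshold.
For i.i.d. uniform `[0,1]` samples `U^j_1,…,U^j_n` (for each `j ≤ d`), `k ≤ n` and
`T ≥ (7/2)((log d)/k + 1)`, `P((n/k) U^j_{(⌊kT⌋)} > 2T) ≤ e^{-2kT/7}` for each `j`,
and `P(∃ j, (n/k) U^j_{(⌊kT⌋)} > 2T) ≤ d e^{-2kT/7} ≤ e^{-k}`. -/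
theorem stmt_17 {d n k : ℕ} (hd : 1 ≤ d) (hk : 1 ≤ k) (hkn : k ≤ n)
    {Ω : Type*} [MeasurableSpace Ω] (μ : Measure Ω) [IsProbabilityMeasure μ]
    (U : Fin d → Fin n → Ω → ℝ)
    (hmeas : ∀ j i, Measurable (U j i))
    (hindep : ∀ j, iIndepFun (U j) μ)
    (hunif : ∀ j i t, 0 ≤ t → t ≤ 1 → μ {ω | U j i ω ≤ t} = ENNReal.ofReal t)
    (T : ℝ) (hT : (7/2) * (Real.log d / k + 1) ≤ T) :
    (∀ j, μ {ω | 2 * T < ((n : ℝ) / k) * orderStat (fun i => U j i ω) ⌊(k : ℝ) * T⌋₊}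
        ≤ ENNReal.ofReal (Real.exp (-(2 * k * T) / 7)))
    ∧ μ {ω | ∃ j, 2 * T < ((n : ℝ) / k) * orderStat (fun i => U j i ω) ⌊(k : ℝ) * T⌋₊}
        ≤ ENNReal.ofReal ((d : ℝ) * Real.exp (-(2 * k * T) / 7))
    ∧ (d : ℝ) * Real.exp (-(2 * k * T) / 7) ≤ Real.exp (-(k : ℝ)) := by
  classical
  have hn : 1 ≤ n := hk.trans hkn
  have hne : Nonempty (Fin n) := ⟨⟨0, hn⟩⟩
  have hk0 : (0:ℝ) < k := by exact_mod_cast hk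
  have hn0 : (0:ℝ) < n := by exact_mod_cast hn
  have hd0 : (0:ℝ) < d := by exact_mod_cast hd
  have hlogd : 0 ≤ Real.log d := Real.log_nonneg (by exact_mod_cast hd)
  have hT72 : (7/2 : ℝ) ≤ T := by
    refine le_trans ?_ hT
    have h1 : (0:ℝ) ≤ Real.log d / k := by positivity
    nlinarith
  have hTpos : (0:ℝ) < T := by linarith
  set m : ℕ := ⌊(k:ℝ)*T⌋₊ with hm
  have hkT : (0:ℝ) < k*T := by positivity
  have hk1 : (1:ℝ) ≤ k := by exact_mod_cast hk
  have hm1 : 1 ≤ m := Nat.le_floor (by push_cast; nlinarith)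
  have hmle : (m:ℝ) ≤ (k:ℝ)*T := Nat.floor_le (le_of_lt hkT)
  set p : ℝ := 2*T*k/n with hp
  have hp0 : 0 ≤ p := by positivity
  -- reduction to counting events
  have hsub : ∀ j, {ω | 2 * T < ((n : ℝ) / k) * orderStat (fun i => U j i ω) m} ⊆
      {ω | (Finset.univ.filter (fun i => U j i ω ≤ p)).card < m} := by
    intro j ω hω
    simp only [Set.mem_setOf_eq] at hω ⊢
    by_contra hc
    push_neg at hc
    have hbdd : BddBelow {s : ℝ | m ≤ (Finset.univ.filter (fun i => U j i ω ≤ s)).card} := by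
      refine ⟨Finset.univ.inf' Finset.univ_nonempty (fun i => U j i ω), fun s hs => ?_⟩
      have hcard : 0 < (Finset.univ.filter (fun i => U j i ω ≤ s)).card :=
        lt_of_lt_of_le hm1 hs
      obtain ⟨i, hi⟩ := Finset.card_pos.mp hcard
      exact le_trans (Finset.inf'_le _ (Finset.mem_univ i)) (Finset.mem_filter.mp hi).2
    have hle : orderStat (fun i => U j i ω) m ≤ p := csInf_le hbdd hc
    have h2 : ((n:ℝ)/k) * p = 2*T := by rw [hp]; field_simp
    have h3 := mul_le_mul_of_nonneg_left hle (le_of_lt (div_pos hn0 hk0))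
    rw [h2] at h3
    linarith
  -- the per-j bound
  have key : ∀ j, μ {ω | 2 * T < ((n : ℝ) / k) * orderStat (fun i => U j i ω) m}
      ≤ ENNReal.ofReal (Real.exp (-(2 * (k:ℝ) * T) / 7)) := by
    intro j
    by_cases hmn : n < m
    · -- event is empty
      have hempty : {ω | 2 * T < ((n : ℝ) / k) * orderStat (fun i => U j i ω) m} = ∅ := by
        ext ω
        simp only [Set.mem_setOf_eq, Set.mem_empty_iff_false, iff_false, not_lt]
        have hset : {s : ℝ | m ≤ (Finset.univ.filter (fun i => (U j i ω : ℝ) ≤ s)).card} = ∅ := by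
          ext s
          simp only [Set.mem_setOf_eq, Set.mem_empty_iff_false, iff_false, not_le]
          exact lt_of_le_of_lt (le_trans (Finset.card_filter_le _ _) (by simp)) hmn
        rw [orderStat, hset, Real.sInf_empty, mul_zero]
        linarith
      rw [hempty]
      simp
    push_neg at hmn
    refine le_trans (measure_mono (hsub j)) ?_
    by_cases hp1 : p ≤ 1
    · -- Chernoff bound
      set t : ℝ := -Real.log 2 with htdef
      have ht : t ≤ 0 := neg_nonpos.mpr (Real.log_nonneg one_le_two)
      set X : Fin n → Ω → ℝ := fun i ω => if U j i ω ≤ p then 1 else 0 with hX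
      have hXmeas : ∀ i, Measurable (X i) := fun i =>
        Measurable.ite ((hmeas j i) measurableSet_Iic) measurable_const measurable_const
      set S : Ω → ℝ := fun ω => ∑ i, X i ω with hS
      have hSmeas : Measurable S := Finset.measurable_sum _ (fun i _ => hXmeas i)
      have hScard : ∀ ω, S ω = ((Finset.univ.filter (fun i => U j i ω ≤ p)).card : ℝ) := by
        intro ω
        simp [hS, hX, Finset.sum_boole]
      have hsub3 : {ω | (Finset.univ.filter (fun i => U j i ω ≤ p)).card < m}
          ⊆ {ω | S ω ≤ (k:ℝ)*T} := by
        intro ω hω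
        simp only [Set.mem_setOf_eq] at hω ⊢
        rw [hScard ω]
        have h1 : ((Finset.univ.filter (fun i => U j i ω ≤ p)).card : ℝ) < (m:ℝ) := by
          exact_mod_cast hω
        linarith
      have hS0 : ∀ ω, 0 ≤ S ω := by
        intro ω
        refine Finset.sum_nonneg fun i _ => ?_
        simp only [hX]; split <;> norm_num
      have hSint : Integrable (fun ω => Real.exp (t * S ω)) μ := by
        refine Integrable.mono' (integrable_const (1:ℝ))
          ((hSmeas.const_mul t).exp.aestronglyMeasurable) (ae_of_all _ fun ω => ?_)
        rw [Real.norm_eq_abs, abs_of_pos (Real.exp_pos _)]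
        calc Real.exp (t * S ω) ≤ Real.exp 0 :=
              Real.exp_le_exp.mpr (mul_nonpos_of_nonpos_of_nonneg ht (hS0 ω))
          _ = 1 := Real.exp_zero
      have hAmeas : ∀ i, MeasurableSet {ω | U j i ω ≤ p} := fun i =>
        (hmeas j i) measurableSet_Iic
      have hXind : ∀ i, X i = Set.indicator {ω | U j i ω ≤ p} (fun _ => (1:ℝ)) := by
        intro i; ext ω; simp [hX, Set.indicator_apply]
      have hXint : ∀ i, Integrable (X i) μ := by
        intro i; rw [hXind i]
        exact (integrable_const 1).indicator (hAmeas i)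
      have hintX : ∀ i, ∫ ω, X i ω ∂μ = p := by
        intro i
        rw [hXind i]
        rw [MeasureTheory.integral_indicator_const (1:ℝ) (hAmeas i), measureReal_def, hunif j i p hp0 hp1]
        simp [ENNReal.toReal_ofReal hp0]
      have hexpt : Real.exp t = 1/2 := by
        rw [htdef, Real.exp_neg, Real.exp_log two_pos]; norm_num
      have hpt : ∀ i ω, Real.exp (t * X i ω) = 1 + (Real.exp t - 1) * X i ω := by
        intro i ω
        by_cases h : U j i ω ≤ p
        · simp only [hX, if_pos h, mul_one]; ring
        · simp [hX, if_neg h]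
      have hmgfX : ∀ i, mgf (X i) μ t = 1 - p/2 := by
        intro i
        show ∫ ω, Real.exp (t * X i ω) ∂μ = 1 - p/2
        calc ∫ ω, Real.exp (t * X i ω) ∂μ
            = ∫ ω, (1 + (Real.exp t - 1) * X i ω) ∂μ := by
              refine integral_congr_ae (ae_of_all _ fun ω => hpt i ω)
          _ = (∫ _, (1:ℝ) ∂μ) + ∫ ω, (Real.exp t - 1) * X i ω ∂μ :=
              integral_add (integrable_const 1) ((hXint i).const_mul _)
          _ = 1 + (Real.exp t - 1) * p := by
              rw [integral_const, integral_const_mul, hintX i]; simp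
          _ = 1 - p/2 := by rw [hexpt]; ring
      have hXindep : iIndepFun X μ := by
        exact (hindep j).comp (fun i (x:ℝ) => if x ≤ p then (1:ℝ) else 0)
          (fun i => Measurable.ite measurableSet_Iic measurable_const measurable_const)
      have hmgfS : mgf S μ t = (1 - p/2)^n := by
        have hsum : S = ∑ i, X i := by ext ω; simp [hS, Finset.sum_apply]
        rw [hsum, hXindep.mgf_sum hXmeas Finset.univ]
        simp [hmgfX, Finset.prod_const, Finset.card_univ]
      have hcher := measure_le_le_exp_mul_mgf (μ := μ) (X := S) ((k:ℝ)*T) ht hSint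
      rw [hmgfS] at hcher
      have hfinal : Real.exp (-t * ((k:ℝ)*T)) * (1 - p/2)^n
          ≤ Real.exp (-(2 * (k:ℝ) * T) / 7) := by
        have hadd := Real.add_one_le_exp (-(p/2))
        have h1 : (1 - p/2)^n ≤ Real.exp (-(p/2))^n := by
          refine pow_le_pow_left₀ (by linarith) (by linarith) n
        have h2 : Real.exp (-(p/2))^n = Real.exp ((n:ℝ) * (-(p/2))) :=
          (Real.exp_nat_mul _ n).symm
        have h3 : (n:ℝ) * (-(p/2)) = -((k:ℝ)*T) := by
          rw [hp]; field_simp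
        rw [h2, h3] at h1
        calc Real.exp (-t * ((k:ℝ)*T)) * (1 - p/2)^n
            ≤ Real.exp (-t * ((k:ℝ)*T)) * Real.exp (-((k:ℝ)*T)) :=
              mul_le_mul_of_nonneg_left h1 (le_of_lt (Real.exp_pos _))
          _ = Real.exp (-t * ((k:ℝ)*T) + -((k:ℝ)*T)) := (Real.exp_add _ _).symm
          _ ≤ Real.exp (-(2 * (k:ℝ) * T) / 7) := by
              rw [Real.exp_le_exp, htdef]
              have hlog2 : Real.log 2 ≤ 5/7 :=
                le_of_lt (lt_trans Real.log_two_lt_d9 (by norm_num))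
              nlinarith [mul_le_mul_of_nonneg_right hlog2 (le_of_lt hkT)]
      calc μ {ω | (Finset.univ.filter (fun i => U j i ω ≤ p)).card < m}
          ≤ μ {ω | S ω ≤ (k:ℝ)*T} := measure_mono hsub3
        _ = ENNReal.ofReal ((μ {ω | S ω ≤ (k:ℝ)*T}).toReal) :=
            (ENNReal.ofReal_toReal (measure_ne_top μ _)).symm
        _ ≤ ENNReal.ofReal (Real.exp (-(2 * (k:ℝ) * T) / 7)) :=
            ENNReal.ofReal_le_ofReal (le_trans hcher hfinal)
    · -- p > 1 : the counting event is null
      push_neg at hp1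
      have hsub2 : {ω | (Finset.univ.filter (fun i => U j i ω ≤ p)).card < m}
          ⊆ ⋃ i, {ω | 1 < U j i ω} := by
        intro ω hω
        simp only [Set.mem_setOf_eq] at hω
        by_contra hc
        simp only [Set.mem_iUnion, Set.mem_setOf_eq, not_exists, not_lt] at hc
        have hall : Finset.univ.filter (fun i => U j i ω ≤ p) = Finset.univ :=
          Finset.filter_true_of_mem fun i _ => le_trans (hc i) (le_of_lt hp1)
        rw [hall, Finset.card_univ, Fintype.card_fin] at hω
        omega
      have hnull : ∀ i, μ {ω | 1 < U j i ω} = 0 := by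
        intro i
        have hcompl : {ω | 1 < U j i ω} = {ω | U j i ω ≤ 1}ᶜ := by
          ext ω; simp [not_le]
        have hms : MeasurableSet {ω | U j i ω ≤ 1} := by exact (hmeas j i) measurableSet_Iic
        rw [hcompl, measure_compl hms (measure_ne_top μ _),
          hunif j i 1 zero_le_one le_rfl]
        simp
      refine le_trans (measure_mono hsub2) (le_trans (measure_iUnion_le _) ?_)
      simp [hnull]
  refine ⟨key, ?_, ?_⟩
  · have hun : {ω | ∃ j, 2 * T < ((n : ℝ) / k) * orderStat (fun i => U j i ω) m}
        = ⋃ j, {ω | 2 * T < ((n : ℝ) / k) * orderStat (fun i => U j i ω) m} := by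
      ext ω; simp [Set.mem_iUnion]
    rw [hun]
    calc μ (⋃ j, {ω | 2 * T < ((n : ℝ) / k) * orderStat (fun i => U j i ω) m})
        ≤ ∑' j, μ {ω | 2 * T < ((n : ℝ) / k) * orderStat (fun i => U j i ω) m} :=
          measure_iUnion_le _
      _ = ∑ j : Fin d, μ {ω | 2 * T < ((n : ℝ) / k) * orderStat (fun i => U j i ω) m} :=
          tsum_fintype _
      _ ≤ ∑ _j : Fin d, ENNReal.ofReal (Real.exp (-(2 * (k:ℝ) * T) / 7)) :=
          Finset.sum_le_sum fun j _ => key j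
      _ = (d : ℕ) * ENNReal.ofReal (Real.exp (-(2 * (k:ℝ) * T) / 7)) := by
          simp [Finset.sum_const, nsmul_eq_mul]
      _ = ENNReal.ofReal ((d:ℝ) * Real.exp (-(2 * (k:ℝ) * T) / 7)) := by
          rw [ENNReal.ofReal_mul (by positivity)]
          simp [ENNReal.ofReal_natCast]
  · have hdeq : (d:ℝ) = Real.exp (Real.log d) := (Real.exp_log hd0).symm
    rw [hdeq, ← Real.exp_add, Real.exp_le_exp]
    have h5 := mul_le_mul_of_nonneg_left hT (by positivity : (0:ℝ) ≤ 2*k/7)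
    have h6 : 2*(k:ℝ)/7 * ((7/2) * (Real.log d / k + 1)) = Real.log d + k := by
      field_simp
    rw [h6] at h5
    nlinarith
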